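/- Let k be a field of characteristic 0, x ∈ k nonzero, and γ ∈ k. Consider the k[t,t⁻¹]-module M = k[t,t⁻¹,(t−x)⁻¹]/k[t,t⁻¹], on which the Witt algebra acts by (f∂)·m = f·m' + γ·f'·m (this action is well-defined on the quotient). Let δ denote the class of (t−x)⁻¹ in M. Then for every p ∈ k[t,t⁻¹] with p(x) = 0, one has (p∂)·δ = (γ−1)·p'(x)·δ. -/

import Mathlib

/-- Formal derivative on Laurent polynomials, sending `tⁿ` to `n·tⁿ⁻¹`. -/
noncomputable def lderiv {k : Type*} [CommRing k] (f : LaurentPolynomial k) : LaurentPolynomial k :=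
  AddMonoidAlgebra.ofCoeff (Finsupp.sum f.coeff fun n a => Finsupp.single (n - 1) ((n : k) * a))

/-- Evaluation of a Laurent polynomial at a point `x` (of a field). -/
noncomputable def lev {k : Type*} [Field k] (x : k) (f : LaurentPolynomial k) : k :=
  Finsupp.sum f.coeff fun n a => a * x ^ n

/-! With `A = γ·p' − (γ−1)·p'(x)` and `g = A·(t−x) − p`, the claim is `(t−x)² ∣ g`. Since `t − x`
vanishes at `x`, `g(x) = −p(x) = 0` and `g'(x) = A(x) − p'(x) = 0`, so `x` is a double root of `g`.
Multiplying by a power of `t`, a unit, turns `g` into a polynomial with the same double root, and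
the polynomial double-root criterion gives the divisibility. -/

open LaurentPolynomial

section Derivative

variable {k : Type*} [CommRing k]

theorem lderiv_C_mul_T (n : ℤ) (a : k) : lderiv (C a * T n) = C ((n : k) * a) * T (n - 1) := by
  rw [← single_eq_C_mul_T, ← single_eq_C_mul_T, lderiv, AddMonoidAlgebra.coeff_single,
    Finsupp.sum_single_index, AddMonoidAlgebra.ofCoeff_single]
  simp

theorem lderiv_add (f g : LaurentPolynomial k) : lderiv (f + g) = lderiv f + lderiv g := by
  unfold lderiv
  rw [AddMonoidAlgebra.coeff_add, Finsupp.sum_add_index, AddMonoidAlgebra.ofCoeff_add] <;>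
    intros <;> simp [mul_add, Finsupp.single_add]

theorem lderiv_sub (f g : LaurentPolynomial k) : lderiv (f - g) = lderiv f - lderiv g :=
  eq_sub_of_add_eq (by rw [← lderiv_add, sub_add_cancel])

theorem lderiv_C (a : k) : lderiv (C a) = 0 := by
  simpa using lderiv_C_mul_T 0 a

theorem lderiv_T_one : lderiv (T 1 : LaurentPolynomial k) = 1 := by
  simpa using lderiv_C_mul_T (1 : ℤ) (1 : k)

theorem lderiv_mul (f g : LaurentPolynomial k) :
    lderiv (f * g) = lderiv f * g + f * lderiv g := by
  induction g using LaurentPolynomial.induction_on' with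
  | add g₁ g₂ h₁ h₂ => rw [mul_add, lderiv_add, h₁, h₂, lderiv_add]; ring
  | C_mul_T n b =>
    induction f using LaurentPolynomial.induction_on' with
    | add f₁ f₂ h₁ h₂ => rw [add_mul, lderiv_add, h₁, h₂, lderiv_add]; ring
    | C_mul_T m a =>
      have hmul (i j : ℤ) (a b : k) : C a * T i * (C b * T j) = C (a * b) * T (i + j) := by
        rw [T_add, map_mul]; ring
      rw [hmul, lderiv_C_mul_T, lderiv_C_mul_T, lderiv_C_mul_T, hmul, hmul,
        show m - 1 + n = m + n - 1 by ring, show m + (n - 1) = m + n - 1 by ring, ← add_mul,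
        ← map_add]
      congr 2
      push_cast
      ring

theorem lderiv_toLaurent (q : Polynomial k) :
    lderiv q.toLaurent = (Polynomial.derivative q).toLaurent := by
  induction q using Polynomial.induction_on' with
  | add f g hf hg => rw [map_add, lderiv_add, hf, hg, Polynomial.derivative_add, map_add]
  | monomial n a =>
    rw [Polynomial.toLaurent_C_mul_T, lderiv_C_mul_T, Polynomial.derivative_monomial,
      Polynomial.toLaurent_C_mul_T]
    cases n with
    | zero => simp
    | succ m =>
      rw [Nat.add_sub_cancel, Int.cast_natCast, mul_comm]
      push_cast
      ring_nf

end Derivative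

section Evaluation

variable {k : Type*} [Field k] {x : k}

theorem lev_eq_eval₂ (hx : x ≠ 0) (f : LaurentPolynomial k) :
    lev x f = eval₂ (RingHom.id k) (Units.mk0 x hx) f := by
  induction f using LaurentPolynomial.induction_on' with
  | add f g hf hg =>
    unfold lev at *
    rw [AddMonoidAlgebra.coeff_add, Finsupp.sum_add_index, map_add, hf, hg] <;>
      intros <;> simp [add_mul]
  | C_mul_T n a =>
    rw [← single_eq_C_mul_T, lev, AddMonoidAlgebra.coeff_single, Finsupp.sum_single_index,
      single_eq_C_mul_T] <;> simp

theorem lev_toLaurent (hx : x ≠ 0) (q : Polynomial k) : lev x q.toLaurent = q.eval x := by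
  rw [lev_eq_eval₂ hx, eval₂_toLaurent, Polynomial.eval₂_id, Units.val_mk0]

end Evaluation

theorem Polynomial.sq_dvd_of_isRoot_of_isRoot_derivative {R : Type*} [CommRing R]
    {p : Polynomial R} {a : R} (h : p.IsRoot a) (h' : (Polynomial.derivative p).IsRoot a) :
    (Polynomial.X - Polynomial.C a) ^ 2 ∣ p := by
  rcases eq_or_ne p 0 with rfl | hp
  · exact dvd_zero _
  · exact (Polynomial.le_rootMultiplicity_iff hp).1
      ((Polynomial.one_lt_rootMultiplicity_iff_isRoot hp).2 ⟨h, h'⟩)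

theorem sq_dvd_of_lev_eq_zero_of_lev_lderiv_eq_zero {k : Type*} [Field k] {x : k} (hx : x ≠ 0)
    {f : LaurentPolynomial k} (h : lev x f = 0) (h' : lev x (lderiv f) = 0) :
    (T 1 - C x) ^ 2 ∣ f := by
  obtain ⟨N, q, hq⟩ := f.exists_T_pow
  have hroot : q.IsRoot x := by
    rw [Polynomial.IsRoot, ← lev_toLaurent hx, hq]
    simp only [lev_eq_eval₂ hx] at h ⊢
    rw [map_mul, h, zero_mul]
  have hroot' : (Polynomial.derivative q).IsRoot x := by
    rw [Polynomial.IsRoot, ← lev_toLaurent hx, ← lderiv_toLaurent, hq, lderiv_mul]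
    simp only [lev_eq_eval₂ hx] at h h' ⊢
    rw [map_add, map_mul, map_mul, h, h', zero_mul, zero_mul, add_zero]
  rw [← (isUnit_T (N : ℤ)).dvd_mul_right, ← hq]
  simpa using map_dvd Polynomial.toLaurent
    (Polynomial.sq_dvd_of_isRoot_of_isRoot_derivative hroot hroot')

/-- The classes agree in `k[t,t⁻¹,(t−x)⁻¹]/k[t,t⁻¹]` exactly when `(t−x)²` times their difference
`p·(−(t−x)⁻²) + γ·p'·(t−x)⁻¹ − (γ−1)·p'(x)·(t−x)⁻¹` lies in `k[t,t⁻¹]`; this is the divisibility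
below. -/
theorem witt_action_on_delta_general {k : Type*} [Field k]
    (x : k) (hx : x ≠ 0) (γ : k) (p : LaurentPolynomial k) (hp : lev x p = 0) :
    (LaurentPolynomial.T 1 - LaurentPolynomial.C x) ^ 2 ∣
      (LaurentPolynomial.C γ * lderiv p -
          LaurentPolynomial.C ((γ - 1) * lev x (lderiv p))) *
        (LaurentPolynomial.T 1 - LaurentPolynomial.C x) - p := by
  have hw : lev x (T 1 - C x) = 0 := by simp [lev_eq_eval₂ hx]
  have hw' : lderiv (T 1 - C x) = 1 := by rw [lderiv_sub, lderiv_T_one, lderiv_C, sub_zero]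
  apply sq_dvd_of_lev_eq_zero_of_lev_lderiv_eq_zero hx
  · simp only [lev_eq_eval₂ hx] at hp hw ⊢
    rw [map_sub, map_mul, hw, hp, mul_zero, sub_zero]
  · rw [lderiv_sub, lderiv_mul, hw', mul_one]
    simp only [lev_eq_eval₂ hx] at hw ⊢
    simp only [map_sub, map_add, map_mul, hw, mul_zero, zero_add, eval₂_C, RingHom.id_apply]
    ring

/-- On `M = k[t,t⁻¹,(t−x)⁻¹]/k[t,t⁻¹]` the Witt algebra acts by `(f∂)·m = f·m' + γ·f'·m`,
and `δ` is the class of `(t−x)⁻¹`.  For `p ∈ k[t,t⁻¹]` with `p(x) = 0` one has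
`(p∂)·δ = (γ−1)·p'(x)·δ` in `M`.  Unfolded (using that the localization embeds, so equality
of classes in `M` means the difference `p·(−(t−x)⁻²) + γ·p'·(t−x)⁻¹ − (γ−1)·p'(x)·(t−x)⁻¹`
lies in `k[t,t⁻¹]`), this says exactly that `(t−x)²` divides
`(γ·p' − (γ−1)·p'(x))·(t−x) − p` in `k[t,t⁻¹]`. -/
theorem witt_action_on_delta {k : Type*} [Field k] [CharZero k]
    (x : k) (hx : x ≠ 0) (γ : k) (p : LaurentPolynomial k) (hp : lev x p = 0) :
    (LaurentPolynomial.T 1 - LaurentPolynomial.C x) ^ 2 ∣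
      (LaurentPolynomial.C γ * lderiv p -
          LaurentPolynomial.C ((γ - 1) * lev x (lderiv p))) *
        (LaurentPolynomial.T 1 - LaurentPolynomial.C x) - p :=
  witt_action_on_delta_general x hx γ p hp
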